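/- Let β ≥ 0, ρ ≥ 0, ε ≥ 0 and Ĉ, C', D' ≥ 0. Let σ' : ℝ → ℝ satisfy |σ'(x)| ≤ β for all x and |σ'(x) − σ'(y)| ≤ ρ|x − y| for all x, y. Let A, A_SG be n×n matrices with ‖A‖ ≤ β, ‖A_SG‖ ≤ β and ‖A_SG − A‖ ≤ ε; let W be a d×d matrix with ‖W‖ ≤ β; let Z, Z_SG be n×d matrices with ‖Z_SG − Z‖ ≤ Ĉ·ε; and let G, G_SG be n×d matrices with ‖G_SG − G‖ ≤ C'·ε, ‖G‖ ≤ D'·β and ‖G_SG‖ ≤ D'·β. Then ‖(σ'(Z_SG)) ⊙ (A_SGᵀ·G_SG·Wᵀ) − (σ'(Z)) ⊙ (Aᵀ·G·Wᵀ)‖ ≤ n·d·β³·((ρ·Ĉ + 1)·D' + C')·ε, where σ' is applied entrywise. -/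

import Mathlib

/-!
Write `M = Aᵀ G Wᵀ` and `M_SG = A_SGᵀ G_SG Wᵀ`. An entry of a triple product is a sum of `n d`
products of entries, so `‖M_SG‖ ≤ n d D' β³`, and telescoping through `A_SG - A` and
`G_SG - G` gives `‖M_SG - M‖ ≤ n d (D' + C') β² ε`. Telescoping the Hadamard product the same
way, `σ'(Z_SG) - σ'(Z)` is entrywise at most `ρ Ĉ ε` by the Lipschitz bound, and `|σ'| ≤ β`
controls the other term.
-/

open Matrix

attribute [local instance] Matrix.normedAddCommGroup

namespace Matrix

variable {l m n α β : Type*}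

theorem hadamard_sub_hadamard [NonUnitalNonAssocRing α] (A A' B B' : Matrix m n α) :
    A' ⊙ B' - A ⊙ B = (A' - A) ⊙ B' + A ⊙ (B' - B) := by
  ext i j
  simp only [sub_apply, add_apply, hadamard_apply]
  noncomm_ring

variable [Fintype l] [Fintype m] [Fintype n]

theorem norm_mul_le_card_mul [NonUnitalNormedRing α] (A : Matrix l m α) (B : Matrix m n α) :
    ‖A * B‖ ≤ Fintype.card m * (‖A‖ * ‖B‖) := by
  rw [norm_le_iff (by positivity)]
  intro i j
  calc ‖(A * B) i j‖ = ‖∑ k, A i k * B k j‖ := rfl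
    _ ≤ ∑ k, ‖A i k‖ * ‖B k j‖ := norm_sum_le_of_le _ fun k _ => norm_mul_le _ _
    _ ≤ ∑ _k : m, ‖A‖ * ‖B‖ := by
        gcongr <;> exact norm_entry_le_entrywise_sup_norm _
    _ = Fintype.card m * (‖A‖ * ‖B‖) := by simp

theorem norm_hadamard_le [NonUnitalNormedRing α] (A B : Matrix m n α) :
    ‖A ⊙ B‖ ≤ ‖A‖ * ‖B‖ := by
  rw [norm_le_iff (by positivity)]
  intro i j
  exact (norm_mul_le _ _).trans <|
    mul_le_mul (norm_entry_le_entrywise_sup_norm _) (norm_entry_le_entrywise_sup_norm _)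
      (norm_nonneg _) (norm_nonneg _)

theorem norm_hadamard_sub_hadamard_le [NonUnitalNormedRing α] (A A' B B' : Matrix m n α) :
    ‖A' ⊙ B' - A ⊙ B‖ ≤ ‖A' - A‖ * ‖B'‖ + ‖A‖ * ‖B' - B‖ := by
  rw [hadamard_sub_hadamard]
  exact (norm_add_le _ _).trans (add_le_add (norm_hadamard_le _ _) (norm_hadamard_le _ _))

theorem norm_map_le [NormedAddCommGroup α] [NormedAddCommGroup β] {f : α → β} {b : ℝ}
    (hf : ∀ x, ‖f x‖ ≤ b) (A : Matrix m n α) : ‖A.map f‖ ≤ b :=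
  (norm_le_iff ((norm_nonneg _).trans (hf 0))).2 fun i j => hf (A i j)

theorem norm_map_sub_map_le [NormedAddCommGroup α] [NormedAddCommGroup β]
    {f : α → β} {K : ℝ} (hK : 0 ≤ K) (hf : ∀ x y, ‖f x - f y‖ ≤ K * ‖x - y‖)
    (A A' : Matrix m n α) : ‖A'.map f - A.map f‖ ≤ K * ‖A' - A‖ := by
  rw [norm_le_iff (by positivity)]
  intro i j
  calc ‖(A'.map f - A.map f) i j‖ = ‖f (A' i j) - f (A i j)‖ := rfl
    _ ≤ K * ‖(A' - A) i j‖ := hf _ _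
    _ ≤ K * ‖A' - A‖ := by gcongr; exact norm_entry_le_entrywise_sup_norm _

theorem norm_transpose_mul_mul_transpose_le [NonUnitalNormedRing α]
    (A : Matrix l m α) (G : Matrix l n α) (W : Matrix n n α) :
    ‖Aᵀ * G * Wᵀ‖ ≤ Fintype.card l * Fintype.card n * (‖A‖ * ‖G‖ * ‖W‖) :=
  calc ‖Aᵀ * G * Wᵀ‖ ≤ Fintype.card n * (‖Aᵀ * G‖ * ‖Wᵀ‖) := norm_mul_le_card_mul _ _
    _ ≤ Fintype.card n * (Fintype.card l * (‖Aᵀ‖ * ‖G‖) * ‖Wᵀ‖) := by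
        gcongr; exact norm_mul_le_card_mul _ _
    _ = Fintype.card l * Fintype.card n * (‖A‖ * ‖G‖ * ‖W‖) := by
        rw [norm_transpose, norm_transpose]; ring

end Matrix

theorem gcn_backward_step_error_bound_general {n d : ℕ} {β ρ ε Chat C' D' : ℝ}
    (hβ : 0 ≤ β) (hρ : 0 ≤ ρ) (hε : 0 ≤ ε) (hChat : 0 ≤ Chat)
    (σ' : ℝ → ℝ) (hσ'bd : ∀ x : ℝ, |σ' x| ≤ β)
    (hσ'lip : ∀ x y : ℝ, |σ' x - σ' y| ≤ ρ * |x - y|)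
    (A ASG : Matrix (Fin n) (Fin n) ℝ) (hA : ‖A‖ ≤ β) (hASG : ‖ASG‖ ≤ β)
    (hAdiff : ‖ASG - A‖ ≤ ε)
    (W : Matrix (Fin d) (Fin d) ℝ) (hW : ‖W‖ ≤ β)
    (Z ZSG : Matrix (Fin n) (Fin d) ℝ) (hZdiff : ‖ZSG - Z‖ ≤ Chat * ε)
    (G GSG : Matrix (Fin n) (Fin d) ℝ) (hGdiff : ‖GSG - G‖ ≤ C' * ε)
    (hGSG : ‖GSG‖ ≤ D' * β) :
    ‖Matrix.hadamard (ZSG.map σ') (ASGᵀ * GSG * Wᵀ) -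
        Matrix.hadamard (Z.map σ') (Aᵀ * G * Wᵀ)‖ ≤
      (n : ℝ) * d * β ^ 3 * ((ρ * Chat + 1) * D' + C') * ε := by
  have hprod (P : Matrix (Fin n) (Fin n) ℝ) (Q : Matrix (Fin n) (Fin d) ℝ) :
      ‖Pᵀ * Q * Wᵀ‖ ≤ n * d * (‖P‖ * ‖Q‖ * β) := by
    have h := norm_transpose_mul_mul_transpose_le P Q W
    rw [Fintype.card_fin, Fintype.card_fin] at h
    exact h.trans (by gcongr)
  have hM : ‖ASGᵀ * GSG * Wᵀ‖ ≤ n * d * (β * (D' * β) * β) :=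
    (hprod ASG GSG).trans (by gcongr)
  have hMdiff : ‖ASGᵀ * GSG * Wᵀ - Aᵀ * G * Wᵀ‖ ≤
      n * d * (ε * (D' * β) * β + β * (C' * ε) * β) := by
    have hsplit : ASGᵀ * GSG * Wᵀ - Aᵀ * G * Wᵀ =
        (ASG - A)ᵀ * GSG * Wᵀ + Aᵀ * (GSG - G) * Wᵀ := by
      simp only [transpose_sub, Matrix.sub_mul, Matrix.mul_sub]; abel
    rw [hsplit, mul_add]
    exact (norm_add_le _ _).trans (add_le_add ((hprod _ _).trans (by gcongr))
      ((hprod _ _).trans (by gcongr)))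
  have hσZ : ‖ZSG.map σ' - Z.map σ'‖ ≤ ρ * (Chat * ε) :=
    (norm_map_sub_map_le hρ hσ'lip Z ZSG).trans (by gcongr)
  calc _ ≤ ‖ZSG.map σ' - Z.map σ'‖ * ‖ASGᵀ * GSG * Wᵀ‖
        + ‖Z.map σ'‖ * ‖ASGᵀ * GSG * Wᵀ - Aᵀ * G * Wᵀ‖ :=
          norm_hadamard_sub_hadamard_le _ _ _ _
    _ ≤ ρ * (Chat * ε) * (n * d * (β * (D' * β) * β))
        + β * (n * d * (ε * (D' * β) * β + β * (C' * ε) * β)) := by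
        gcongr; exact norm_map_le hσ'bd Z
    _ = _ := by ring

/-- Error bound for one step of the GCN backpropagation rule with approximate
quantities `Z_SG`, `A_SG`, `G_SG`. -/
theorem gcn_backward_step_error_bound {n d : ℕ} {β ρ ε Chat C' D' : ℝ}
    (hβ : 0 ≤ β) (hρ : 0 ≤ ρ) (hε : 0 ≤ ε) (hChat : 0 ≤ Chat) (hC' : 0 ≤ C')
    (hD' : 0 ≤ D')
    (σ' : ℝ → ℝ) (hσ'bd : ∀ x : ℝ, |σ' x| ≤ β)
    (hσ'lip : ∀ x y : ℝ, |σ' x - σ' y| ≤ ρ * |x - y|)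
    (A ASG : Matrix (Fin n) (Fin n) ℝ) (hA : ‖A‖ ≤ β) (hASG : ‖ASG‖ ≤ β)
    (hAdiff : ‖ASG - A‖ ≤ ε)
    (W : Matrix (Fin d) (Fin d) ℝ) (hW : ‖W‖ ≤ β)
    (Z ZSG : Matrix (Fin n) (Fin d) ℝ) (hZdiff : ‖ZSG - Z‖ ≤ Chat * ε)
    (G GSG : Matrix (Fin n) (Fin d) ℝ) (hGdiff : ‖GSG - G‖ ≤ C' * ε)
    (hG : ‖G‖ ≤ D' * β) (hGSG : ‖GSG‖ ≤ D' * β) :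
    ‖Matrix.hadamard (ZSG.map σ') (ASGᵀ * GSG * Wᵀ) -
        Matrix.hadamard (Z.map σ') (Aᵀ * G * Wᵀ)‖ ≤
      (n : ℝ) * d * β ^ 3 * ((ρ * Chat + 1) * D' + C') * ε :=
  gcn_backward_step_error_bound_general hβ hρ hε hChat σ' hσ'bd hσ'lip A ASG hA hASG hAdiff W hW Z
    ZSG hZdiff G GSG hGdiff hGSG
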